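/- arXiv:1611.07786 — 2 statements merged into one kernel-verified Lean document; each statement's English description precedes it below -/
import Mathlib

section
/- For every integer k >= 3, there is a unique positive real ξ* satisfying k = ξ(1 - e^{-ξ}) / (1 - e^{-ξ} - ξ e^{-ξ}). -/
open Real Set

theorem exists_unique_xi (k : ℕ) (hk : 3 ≤ k) :
    ∃! ξ : ℝ, 0 < ξ ∧
      (k : ℝ) = ξ * (1 - Real.exp (-ξ)) / (1 - Real.exp (-ξ) - ξ * Real.exp (-ξ)) := by
  have hc : (3:ℝ) ≤ (k:ℝ) := by exact_mod_cast hk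
  set c : ℝ := (k:ℝ) with hcdef
  set h : ℝ → ℝ := fun x => (c - x) * Real.exp x - c - (c-1)*x with hh
  set h' : ℝ → ℝ := fun x => (c - 1 - x) * Real.exp x - (c-1) with hh'
  -- derivatives
  have hd : ∀ x : ℝ, HasDerivAt h (h' x) x := by
    intro x
    have H := ((((hasDerivAt_id x).const_sub c).mul (Real.hasDerivAt_exp x)).sub_const c).sub
      ((hasDerivAt_id x).const_mul (c-1))
    simp only [id_eq] at H
    have e : h' x = -1 * Real.exp x + (c - x) * Real.exp x - (c-1)*1 := by
      simp only [hh']; ring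
    rw [e]
    exact H
  have hd' : ∀ x : ℝ, HasDerivAt h' ((c - 2 - x) * Real.exp x) x := by
    intro x
    have H := (((hasDerivAt_id x).const_sub (c-1)).mul (Real.hasDerivAt_exp x)).sub_const (c-1)
    simp only [id_eq] at H
    have e : (c - 2 - x) * Real.exp x = -1 * Real.exp x + (c - 1 - x) * Real.exp x := by ring
    rw [e]
    exact H
  have hcont : Continuous h := by
    have : h = fun x => (c - x) * Real.exp x - c - (c-1)*x := rfl
    rw [this]; continuity
  have hcont' : Continuous h' := by
    have : h' = fun x => (c - 1 - x) * Real.exp x - (c-1) := rfl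
    rw [this]; continuity
  have hderiv : ∀ x : ℝ, deriv h x = h' x := fun x => (hd x).deriv
  have hderiv' : ∀ x : ℝ, deriv h' x = (c - 2 - x) * Real.exp x := fun x => (hd' x).deriv
  have h0 : h 0 = 0 := by simp [hh]
  have h'0 : h' 0 = 0 := by simp [hh']
  -- h' strictly monotone on [0, c-2], strictly anti on [c-2, ∞)
  have mono' : StrictMonoOn h' (Icc 0 (c-2)) := by
    apply strictMonoOn_of_deriv_pos (convex_Icc _ _) hcont'.continuousOn
    intro x hx
    rw [interior_Icc] at hx
    rw [hderiv']
    have := Real.exp_pos x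
    nlinarith [hx.1, hx.2]
  have anti' : StrictAntiOn h' (Ici (c-2)) := by
    apply strictAntiOn_of_deriv_neg (convex_Ici _) hcont'.continuousOn
    intro x hx
    rw [interior_Ici] at hx
    rw [hderiv']
    rw [Set.mem_Ioi] at hx
    have := Real.exp_pos x
    nlinarith
  -- find m, the zero of h'
  have h'pos : 0 < h' (c-2) := by
    have := Real.add_one_lt_exp (x := c - 2) (by linarith)
    simp only [hh']
    nlinarith
  have h'neg : h' c < 0 := by
    simp only [hh']
    nlinarith [Real.exp_pos c]
  obtain ⟨m, hmIcc, hm0⟩ : ∃ m ∈ Icc (c-2) c, h' m = 0 := by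
    have hsub := intermediate_value_Icc' (by linarith : c - 2 ≤ c) hcont'.continuousOn
    have : (0:ℝ) ∈ Icc (h' c) (h' (c-2)) := ⟨le_of_lt h'neg, le_of_lt h'pos⟩
    obtain ⟨m, hm, hm0⟩ := hsub this
    exact ⟨m, hm, hm0⟩
  have hmgt : c - 2 < m := by
    rcases lt_or_eq_of_le hmIcc.1 with h | h
    · exact h
    · exfalso; rw [← h] at hm0; linarith
  have hmlt : m < c := by
    rcases lt_or_eq_of_le hmIcc.2 with h | h
    · exact h
    · exfalso; rw [h] at hm0; linarith
  have hmpos : 0 < m := by linarith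
  -- h strictly monotone on [0, m]
  have monoh : StrictMonoOn h (Icc 0 m) := by
    apply strictMonoOn_of_deriv_pos (convex_Icc _ _) hcont.continuousOn
    intro x hx
    rw [interior_Icc] at hx
    rw [hderiv]
    rcases le_or_gt x (c-2) with hxc | hxc
    · have := mono' ⟨le_refl 0, by linarith⟩ ⟨le_of_lt hx.1, hxc⟩ hx.1
      rw [h'0] at this; exact this
    · have := anti' (le_of_lt hxc) (le_of_lt hmgt) hx.2
      rw [hm0] at this; exact this
  have antih : StrictAntiOn h (Ici m) := by
    apply strictAntiOn_of_deriv_neg (convex_Ici _) hcont.continuousOn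
    intro x hx
    rw [interior_Ici] at hx
    rw [hderiv]
    have := anti' (le_of_lt hmgt) (by simp at hx ⊢; linarith [hmgt]) hx
    rw [hm0] at this; exact this
  have hmposval : 0 < h m := by
    have := monoh ⟨le_refl 0, le_of_lt hmpos⟩ ⟨le_of_lt hmpos, le_refl m⟩ hmpos
    rw [h0] at this; exact this
  have hcneg : h c < 0 := by
    simp only [hh]
    nlinarith
  -- existence of zero ξ of h in (m, c)
  obtain ⟨ξ, hξIcc, hξ0⟩ : ∃ ξ ∈ Icc m c, h ξ = 0 := by
    have hsub := intermediate_value_Icc' (le_of_lt hmlt) hcont.continuousOn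
    have : (0:ℝ) ∈ Icc (h c) (h m) := ⟨le_of_lt hcneg, le_of_lt hmposval⟩
    obtain ⟨x, hx, hx0⟩ := hsub this
    exact ⟨x, hx, hx0⟩
  have hξpos : 0 < ξ := lt_of_lt_of_le hmpos hξIcc.1
  -- positivity of denominator and the equivalence
  have equiv : ∀ x : ℝ, 0 < x →
      ((c = x * (1 - Real.exp (-x)) / (1 - Real.exp (-x) - x * Real.exp (-x))) ↔ h x = 0) := by
    intro x hx
    have hex := Real.exp_pos x
    have h1 : x + 1 < Real.exp x := Real.add_one_lt_exp (ne_of_gt hx)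
    have hD : 0 < 1 - Real.exp (-x) - x * Real.exp (-x) := by
      rw [Real.exp_neg]
      rw [show 1 - (Real.exp x)⁻¹ - x * (Real.exp x)⁻¹
          = (Real.exp x - 1 - x) * (Real.exp x)⁻¹ by field_simp]
      have : 0 < Real.exp x - 1 - x := by linarith
      positivity
    rw [eq_div_iff (ne_of_gt hD)]
    have key : h x = (c * (1 - Real.exp (-x) - x * Real.exp (-x)) - x * (1 - Real.exp (-x)))
        * Real.exp x := by
      simp only [hh]
      rw [Real.exp_neg]
      field_simp
      ring
    constructor
    · intro heq
      rw [key]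
      have : c * (1 - Real.exp (-x) - x * Real.exp (-x)) - x * (1 - Real.exp (-x)) = 0 := by
        rw [heq]; ring
      rw [this, zero_mul]
    · intro heq
      rw [key] at heq
      rcases mul_eq_zero.mp heq with hq | hq
      · linarith [sub_eq_zero.mp hq]
      · exact absurd hq (ne_of_gt hex)
  -- conclude
  refine ⟨ξ, ⟨hξpos, (equiv ξ hξpos).mpr hξ0⟩, ?_⟩
  rintro y ⟨hypos, hyeq⟩
  have hy0 : h y = 0 := (equiv y hypos).mp hyeq
  have hym : m ≤ y := by
    by_contra hlt
    push_neg at hlt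
    have := monoh ⟨le_refl 0, hmpos.le⟩ ⟨hypos.le, hlt.le⟩ hypos
    rw [h0] at this
    linarith
  have : h y = h ξ := by rw [hy0, hξ0]
  exact antih.injOn (mem_Ici.mpr hym) (mem_Ici.mpr hξIcc.1) this
end

section
/- Consider a directed allocation graph G = (V, E) built by the local search allocation algorithm maintaining labels L : V → ℕ. The invariant holds after every move: for every directed edge (u, v) ∈ E, L(u) <= L(v) + 1. -/
/-- A state of the local search allocation algorithm: a labelling of the
vertices (locations) and, for each vertex, the item (given by its `k` chosen
vertices) currently placed there, if any. -/
structure LSAState (V : Type*) (k : ℕ) where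
  L : V → ℕ
  occ : V → Option (Fin k → V)

/-- The allocation-graph edge relation: `(u, w)` is an edge iff `u` is occupied
by an item having both `u` and `w` among its choices. -/
def lsaEdge {V : Type*} {k : ℕ} (s : LSAState V k) (u w : V) : Prop :=
  ∃ x : Fin k → V, s.occ u = some x ∧ (∃ i, x i = u) ∧ (∃ j, x j = w)

/-- One move of the local search allocation algorithm: item `x` is assigned to
a vertex `v` of minimum label among its `k` choices; the new label of `v` is
one more than the minimum label of the remaining choices of `x`; all other
labels and occupancies are unchanged. -/
def lsaStep {V : Type*} {k : ℕ} (s s' : LSAState V k) : Prop :=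
  ∃ (x : Fin k → V) (v : V),
    (∃ i, x i = v) ∧
    (∀ j, s.L v ≤ s.L (x j)) ∧
    (∃ m : ℕ, (∀ j, x j ≠ v → m ≤ s.L (x j)) ∧ (∃ j, x j ≠ v ∧ s.L (x j) = m) ∧
      s'.L v = m + 1) ∧
    (∀ u, u ≠ v → s'.L u = s.L u) ∧
    s'.occ v = some x ∧ (∀ u, u ≠ v → s'.occ u = s.occ u)

/-- The invariant `L(u) ≤ L(v) + 1` for every directed edge `(u, v)` of the
allocation graph holds after every sequence of moves of the algorithm started
from the empty state. -/
theorem lsa_invariant {V : Type*} {k : ℕ} (s0 s : LSAState V k)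
    (h0L : ∀ v, s0.L v = 0) (h0occ : ∀ v, s0.occ v = none)
    (h : Relation.ReflTransGen lsaStep s0 s) :
    ∀ u w, lsaEdge s u w → s.L u ≤ s.L w + 1 := by
  induction h with
  | refl =>
    intro u w ⟨x, hx, _, _⟩
    rw [h0occ u] at hx; exact absurd hx (by simp)
  | tail _ hstep ih =>
    rename_i b c _
    obtain ⟨x, v, ⟨i, hiv⟩, hmin, ⟨m, hmle, ⟨j0, hj0v, hj0m⟩, hLv⟩, hLother,
      hoccv, hoccother⟩ := hstep
    intro u w ⟨x', hx', ⟨i', hi'⟩, ⟨j', hj'⟩⟩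
    by_cases huv : u = v
    · subst huv
      rw [hoccv] at hx'
      have hxx : x = x' := by injection hx'
      subst hxx
      by_cases hwv : w = u
      · subst hwv; omega
      · have hw : c.L w = b.L w := hLother w hwv
        have : m ≤ b.L (x j') := hmle j' (by rw [hj']; exact hwv)
        rw [hj'] at this
        omega
    · have hu : c.L u = b.L u := hLother u huv
      have hoccu : b.occ u = some x' := by rw [← hoccother u huv]; exact hx'
      have hedge : lsaEdge b u w := ⟨x', hoccu, ⟨i', hi'⟩, ⟨j', hj'⟩⟩
      have hIH := ih u w hedge
      by_cases hwv : w = v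
      · subst hwv
        have h1 : b.L w ≤ b.L (x j0) := hmin j0
        rw [hj0m] at h1
        omega
      · have hw : c.L w = b.L w := hLother w hwv
        omega
end
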